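/- The assignment E_j ↦ (v_j^{−1}−v_j)^{−1}·ⱼ𝒮, K_i^{±1} ↦ 𝒦_{±i}, J_i^{±1} ↦ 𝒥_{±i} extends to a (unique) 𝔽-algebra anti-homomorphism ρ⁺: ̂'𝔣⁺ → End_𝔽( ̂'𝔣⁻). -/

import Mathlib

open scoped TensorProduct

noncomputable section

/-- A Cartan datum on `I`. -/
structure CartanDatum (I : Type) where
  c : I → I → ℤ
  symm : ∀ i j, c i j = c j i
  pos : ∀ i, 0 < c i i
  even : ∀ i, Even (c i i)
  dvd : ∀ i j, i ≠ j → c i i ∣ 2 * c i j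
  nonpos : ∀ i j, i ≠ j → 2 * c i j ≤ 0

namespace CartanDatum

variable {I : Type} (cd : CartanDatum I)

/-- `d i = (i·i)/2`. -/
def d (i : I) : ℤ := cd.c i i / 2

/-- `a i j = 2(i·j)/(i·i)`. -/
def a (i j : I) : ℤ := 2 * cd.c i j / cd.c i i

/-- Extension of the pairing to `ℕ[I] × ℕ[I]`. -/
def dotN (ν μ : I →₀ ℕ) : ℤ :=
  ν.sum fun i m => μ.sum fun j n => (m : ℤ) * (n : ℤ) * cd.c i j

end CartanDatum

/-- A multiplicative bilinear form `ℕ[I] × ℕ[I] → 𝔽`. -/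
structure MultForm (I 𝔽 : Type) [Field 𝔽] where
  f : (I →₀ ℕ) → (I →₀ ℕ) → 𝔽
  add_left : ∀ ν ν' μ, f (ν + ν') μ = f ν μ * f ν' μ
  add_right : ∀ μ ν ν', f μ (ν + ν') = f μ ν * f μ ν'
  ne_zero : ∀ ν μ, f ν μ ≠ 0

/-- The trivial multiplicative bilinear form, constantly `1`. -/
def trivMF (I 𝔽 : Type) [Field 𝔽] : MultForm I 𝔽 :=
  ⟨fun _ _ => 1, fun _ _ _ => by ring, fun _ _ _ => by ring, fun _ _ => one_ne_zero⟩

variable {I : Type}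

/-- The generator `i` of `ℕ[I]`. -/
def δN (i : I) : I →₀ ℕ := Finsupp.single i 1

/-- The model for the free algebra `'𝔣` on the `θ i`. -/
abbrev FA (𝔽 I : Type) [Field 𝔽] := MonoidAlgebra 𝔽 (FreeMonoid I)

/-- The generator `θ i` of `'𝔣`. -/
def θ (𝔽 : Type) [Field 𝔽] {I : Type} (i : I) : FA 𝔽 I :=
  MonoidAlgebra.of 𝔽 (FreeMonoid I) (FreeMonoid.of i)

/-- The `ℕ[I]`-degree of a word. -/
def wt [DecidableEq I] (w : FreeMonoid I) : I →₀ ℕ :=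
  Multiset.toFinsupp (↑(FreeMonoid.toList w))

/-- Homogeneity of degree `ν` in `'𝔣`. -/
def IsHomog {𝔽 : Type} [Field 𝔽] [DecidableEq I] (ν : I →₀ ℕ) (x : FA 𝔽 I) : Prop :=
  ∀ w ∈ Finsupp.support (MonoidAlgebra.coeff x : FreeMonoid I →₀ 𝔽), wt w = ν

/-- The model for `'𝔣 ⊗ '𝔣` (basis: pairs of words). -/
abbrev TA (𝔽 I : Type) [Field 𝔽] := MonoidAlgebra 𝔽 (FreeMonoid I × FreeMonoid I)

/-- The tensor `x ⊗ y` in the model of `'𝔣 ⊗ '𝔣`. -/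
def tmul {𝔽 : Type} [Field 𝔽] (x y : FA 𝔽 I) : TA 𝔽 I :=
  Finsupp.sum (MonoidAlgebra.coeff x : FreeMonoid I →₀ 𝔽) fun w a =>
    Finsupp.sum (MonoidAlgebra.coeff y : FreeMonoid I →₀ 𝔽) fun u b =>
      MonoidAlgebra.ofCoeff (Finsupp.single (w, u) (a * b) : (FreeMonoid I × FreeMonoid I) →₀ 𝔽)

/-- The twisted multiplication on `'𝔣 ⊗ '𝔣`:
`(x₁⊗x₂)(y₁⊗y₂) = v^{-|y₁|·|x₂|} β(|x₂|,|y₁|) x₁y₁ ⊗ x₂y₂`. -/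
def tMul [DecidableEq I] {𝔽 : Type} [Field 𝔽] (cd : CartanDatum I) (v : 𝔽)
    (β : MultForm I 𝔽) (z z' : TA 𝔽 I) : TA 𝔽 I :=
  Finsupp.sum (MonoidAlgebra.coeff z : (FreeMonoid I × FreeMonoid I) →₀ 𝔽) fun p a =>
    Finsupp.sum (MonoidAlgebra.coeff z' : (FreeMonoid I × FreeMonoid I) →₀ 𝔽) fun q b =>
      MonoidAlgebra.ofCoeff (Finsupp.single (p.1 * q.1, p.2 * q.2)
        (a * b * v ^ (-(cd.dotN (wt q.1) (wt p.2))) * β.f (wt p.2) (wt q.1))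
        : (FreeMonoid I × FreeMonoid I) →₀ 𝔽)

/-- The bilinear form on `'𝔣 ⊗ '𝔣` induced by a form `B` on `'𝔣`:
`(x₁⊗x₂, y₁⊗y₂) = α(|x₁|,|x₂|) (x₁,y₁) (x₂,y₂)` for homogeneous `x₁, x₂`. -/
def pairT [DecidableEq I] {𝔽 : Type} [Field 𝔽] (α : MultForm I 𝔽)
    (B : FA 𝔽 I →ₗ[𝔽] FA 𝔽 I →ₗ[𝔽] 𝔽) (z z' : TA 𝔽 I) : 𝔽 :=
  Finsupp.sum (MonoidAlgebra.coeff z : (FreeMonoid I × FreeMonoid I) →₀ 𝔽) fun p a =>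
    Finsupp.sum (MonoidAlgebra.coeff z' : (FreeMonoid I × FreeMonoid I) →₀ 𝔽) fun q b =>
      a * b * α.f (wt p.1) (wt p.2)
        * B (MonoidAlgebra.single p.1 1) (MonoidAlgebra.single q.1 1)
        * B (MonoidAlgebra.single p.2 1) (MonoidAlgebra.single q.2 1)

/-- The quantum integer `[n]_c`. -/
def qnum {𝔽 : Type} [Field 𝔽] (c : 𝔽) (n : ℕ) : 𝔽 :=
  (c ^ (n : ℤ) - c ^ (-(n : ℤ))) / (c - c⁻¹)

/-- The quantum factorial `[n]_c!`. -/
def qfact {𝔽 : Type} [Field 𝔽] (c : 𝔽) (n : ℕ) : 𝔽 :=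
  ∏ k ∈ Finset.range n, qnum c (k + 1)

/-- The divided power `θ_i^{(n)} = θ_i^n / [n]_{v_i}!`. -/
def θdiv [DecidableEq I] {𝔽 : Type} [Field 𝔽] (cd : CartanDatum I) (v : 𝔽)
    (i : I) (n : ℕ) : FA 𝔽 I :=
  (qfact (v ^ cd.d i) n)⁻¹ • (θ 𝔽 i) ^ n

/-- The twisted quantum Serre element
`D_{ij} = Σ_{k+k'=1-a_{ij}} (-1)^k β(i,j)^{-k} θ_i^{(k)} θ_j θ_i^{(k')}`. -/
def Dij [DecidableEq I] {𝔽 : Type} [Field 𝔽] (cd : CartanDatum I) (v : 𝔽)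
    (g : I → I → 𝔽) (i j : I) : FA 𝔽 I :=
  ∑ k ∈ Finset.range ((1 - cd.a i j).toNat + 1),
    ((-1 : 𝔽) ^ k * ((g i j)⁻¹) ^ k) •
      (θdiv cd v i k * θ 𝔽 j * θdiv cd v i ((1 - cd.a i j).toNat - k))

end
noncomputable section

variable {I : Type}

/-- The generator `i` of `ℤ[I]`. -/
def δZ (i : I) : I →₀ ℤ := Finsupp.single i 1

/-- The inclusion `ℕ[I] → ℤ[I]`. -/
def nz (ν : I →₀ ℕ) : I →₀ ℤ := Finsupp.mapRange (fun n : ℕ => (n : ℤ)) rfl ν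

/-- The multiplicative extension to `ℤ[I] × ℤ[I]` of generator values `g : I → I → 𝔽`. -/
def extZ {𝔽 : Type} [Field 𝔽] (g : I → I → 𝔽) (ν μ : I →₀ ℤ) : 𝔽 :=
  ν.prod fun i m => μ.prod fun j n => g i j ^ (m * n)

/-- The form `⟨i,j⟩ = v^{-i·j} β(i,j) ξ(j,i)`, extended multiplicatively to `ℤ[I]`. -/
def ang {𝔽 : Type} [Field 𝔽] (cd : CartanDatum I) (v : 𝔽) (βg ξg : I → I → 𝔽) :
    (I →₀ ℤ) → (I →₀ ℤ) → 𝔽 :=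
  extZ fun i j => v ^ (-(cd.c i j)) * βg i j * ξg j i

/-- The monomial in `F : I → A` associated with a word `w`. -/
def wordProd {A : Type} [Monoid A] (F : I → A) (w : FreeMonoid I) : A :=
  ((FreeMonoid.toList w).map F).prod

/-- `x` is homogeneous of degree `μ` in the subalgebra generated by the image of `F`. -/
def HomogIn (𝔽 : Type) [Field 𝔽] [DecidableEq I] {A : Type} [Ring A] [Algebra 𝔽 A]
    (F : I → A) (μ : I →₀ ℕ) (x : A) : Prop :=
  x ∈ Submodule.span 𝔽 {z | ∃ w, wt w = μ ∧ z = wordProd F w}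

end

/-! The anti-homomorphism `ρ⁺` is an algebra homomorphism into `End(̂'𝔣⁻)ᵐᵒᵖ`, and `̂'𝔣⁺` has the
PBW-type basis `K_a E_w J_c`, so such a homomorphism exists as soon as the images of the generators
satisfy the smash-product relations `K_a E_i = χ(a,i) E_i K_a`, `J_a E_i = ψ(a,i) E_i J_a` (with
`K`, `J` commuting exponentials): both sides of a product of basis elements are then normal-ordered
by the same scalar. On `̂'𝔣⁻` the operators `𝒦_ν`, `𝒥_ν` are diagonal in the basis
`K'_{τ₁} F_w J'_{τ₂}` with eigenvalues multiplicative in `(τ₁, |w|)`, and the twisted Leibniz rule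
shows that `ⱼ𝒮` lowers `|w|` by `j`; this gives the commutation of `ⱼ𝒮` with `𝒦_ν` and `𝒥_ν`,
which in the opposite algebra are exactly the smash-product relations. -/

section Words

variable {I : Type}

theorem wt_one [DecidableEq I] : wt (1 : FreeMonoid I) = 0 := by
  simp [wt]

theorem wt_mul [DecidableEq I] (w u : FreeMonoid I) : wt (w * u) = wt w + wt u := by
  simp only [wt, FreeMonoid.toList_mul]
  rw [← Multiset.coe_add, map_add]

theorem wt_of [DecidableEq I] (i : I) : wt (FreeMonoid.of i) = δN i := by
  simp [wt, δN, FreeMonoid.toList_of]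

theorem nz_add (a b : I →₀ ℕ) : nz (a + b) = nz a + nz b :=
  Finsupp.mapRange_add (fun x y => Nat.cast_add x y) a b

theorem nz_δN (i : I) : nz (δN i) = δZ i := by
  simp [nz, δN, δZ, Finsupp.mapRange_single]

variable {M : Type} [Monoid M]

@[simp]
theorem wordProd_one (F : I → M) : wordProd F 1 = 1 := by
  simp [wordProd]

theorem wordProd_mul (F : I → M) (w u : FreeMonoid I) :
    wordProd F (w * u) = wordProd F w * wordProd F u := by
  simp [wordProd, FreeMonoid.toList_mul]

@[simp]
theorem wordProd_of (F : I → M) (i : I) : wordProd F (FreeMonoid.of i) = F i := by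
  simp [wordProd]

theorem map_wordProd {N Φ : Type} [Monoid N] [FunLike Φ M N] [MonoidHomClass Φ M N] (f : Φ)
    (F : I → M) (w : FreeMonoid I) : f (wordProd F w) = wordProd (fun i => f (F i)) w := by
  simp [wordProd, map_list_prod, List.map_map, Function.comp_def]

end Words

section Exponential

variable {I : Type}

theorem induction_δZ {P : (I →₀ ℤ) → Prop} (zero : P 0) (add : ∀ a b, P a → P b → P (a + b))
    (neg : ∀ a, P a → P (-a)) (single : ∀ i, P (δZ i)) (a : I →₀ ℤ) : P a := by
  have hspan : AddSubgroup.closure (Set.range (δZ : I → I →₀ ℤ)) = ⊤ := by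
    rw [← Submodule.span_int_eq_addSubgroupClosure]
    have : (δZ : I → I →₀ ℤ) = Finsupp.basisSingleOne := by
      rw [Finsupp.coe_basisSingleOne]; rfl
    rw [this, Finsupp.basisSingleOne.span_eq, Submodule.top_toAddSubgroup]
  exact AddSubgroup.closure_induction (p := fun x _ => P x)
    (by rintro _ ⟨i, rfl⟩; exact single i) zero
    (fun a b _ _ => add a b) (fun a _ => neg a) (hspan ▸ AddSubgroup.mem_top a)

theorem ext_δZ_of_map_add {M : Type} [Monoid M] {f g : (I →₀ ℤ) → M}
    (hf0 : f 0 = 1) (hf : ∀ a b, f (a + b) = f a * f b)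
    (hg0 : g 0 = 1) (hg : ∀ a b, g (a + b) = g a * g b) (h : ∀ i, f (δZ i) = g (δZ i)) :
    f = g := by
  refine funext (induction_δZ (by rw [hf0, hg0]) (fun a b ha hb => by rw [hf, hg, ha, hb])
    (fun a ha => ?_) h)
  calc f (-a) = f (-a) * (g a * g (-a)) := by rw [← hg, add_neg_cancel, hg0, mul_one]
    _ = f (-a + a) * g (-a) := by rw [← ha, ← mul_assoc, hf]
    _ = g (-a) := by rw [neg_add_cancel, hf0, one_mul]

theorem mul_eq_smul_mul_of_δZ {R A : Type} [CommRing R] [Ring A] [Algebra R A]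
    {K : (I →₀ ℤ) → A} {c : (I →₀ ℤ) → R} {x : A}
    (hK0 : K 0 = 1) (hK : ∀ a b, K (a + b) = K a * K b)
    (hc0 : c 0 = 1) (hc : ∀ a b, c (a + b) = c a * c b)
    (h : ∀ i, K (δZ i) * x = c (δZ i) • (x * K (δZ i))) (a : I →₀ ℤ) :
    K a * x = c a • (x * K a) := by
  refine induction_δZ (P := fun a => K a * x = c a • (x * K a))
    (by rw [hK0, hc0, one_mul, mul_one, one_smul])
    (fun a b ha hb => ?_) (fun a ha => ?_) h a
  · rw [hK, mul_assoc, hb, mul_smul_comm, ← mul_assoc, ha, smul_mul_assoc, smul_smul, hc,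
      mul_comm (c a), mul_assoc x, ← hK]
  · have hKK : K a * K (-a) = 1 := by rw [← hK, add_neg_cancel, hK0]
    have hx : x * K (-a) = c a • (K (-a) * x) := by
      calc x * K (-a) = K (-a) * (K a * x) * K (-a) := by
            rw [← mul_assoc, ← hK, neg_add_cancel, hK0, one_mul]
        _ = c a • (K (-a) * x) := by
            rw [ha, mul_smul_comm, smul_mul_assoc, mul_assoc, mul_assoc, hKK, mul_one]
    rw [hx, smul_smul, ← hc, neg_add_cancel, hc0, one_smul]

end Exponential

section Bimultiplicative

variable {I 𝔽 : Type} [Field 𝔽] (g : I → I → 𝔽)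

theorem extZ_zero_left (μ : I →₀ ℤ) : extZ g 0 μ = 1 := by
  simp [extZ]

theorem extZ_zero_right (ν : I →₀ ℤ) : extZ g ν 0 = 1 := by
  simp [extZ]

theorem extZ_δZ_δZ (i j : I) : extZ g (δZ i) (δZ j) = g i j := by
  simp [extZ, δZ, Finsupp.prod_single_index]

variable {g}

theorem extZ_add_left (hg : ∀ i j, g i j ≠ 0) (a b μ : I →₀ ℤ) :
    extZ g (a + b) μ = extZ g a μ * extZ g b μ := by
  classical
  unfold extZ
  rw [Finsupp.prod_add_index (fun _ _ => by simp) fun i _ m m' => ?_]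
  rw [← Finsupp.prod_mul]
  exact Finsupp.prod_congr fun j _ => by rw [add_mul, zpow_add₀ (hg i j)]

theorem extZ_add_right (hg : ∀ i j, g i j ≠ 0) (ν a b : I →₀ ℤ) :
    extZ g ν (a + b) = extZ g ν a * extZ g ν b := by
  classical
  unfold extZ
  rw [← Finsupp.prod_mul]
  refine Finsupp.prod_congr fun i _ => ?_
  rw [Finsupp.prod_add_index (fun _ _ => by simp) fun j _ m m' => by
    rw [mul_add, zpow_add₀ (hg i j)]]

end Bimultiplicative

/-- The defining relations of the smash product `'𝔣⁺ ⋊ 𝔥`. -/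
structure SmashRelations {R A G ι : Type} [CommRing R] [Ring A] [Algebra R A] [AddGroup G]
    (χ ψ : G → ι → R) (K J : G → A) (E : ι → A) : Prop where
  K_zero : K 0 = 1
  K_add : ∀ a b, K (a + b) = K a * K b
  J_zero : J 0 = 1
  J_add : ∀ a b, J (a + b) = J a * J b
  K_J_comm : ∀ a b, K a * J b = J b * K a
  K_E : ∀ a i, K a * E i = χ a i • (E i * K a)
  J_E : ∀ a i, J a * E i = ψ a i • (E i * J a)

section Smash

variable {R A G ι : Type} [CommRing R] [Ring A] [Algebra R A]

theorem mul_wordProd_eq_smul {I : Type} {x : A} {E : I → A} {c : I → R}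
    (h : ∀ i, x * E i = c i • (E i * x)) (w : FreeMonoid I) :
    x * wordProd E w = wordProd c w • (wordProd E w * x) := by
  induction w using FreeMonoid.inductionOn' with
  | one => simp
  | of_mul i w ih =>
    simp only [wordProd_mul, wordProd_of]
    rw [← mul_assoc, h, smul_mul_assoc, mul_assoc, ih, mul_smul_comm, smul_smul, mul_assoc]

theorem smashRelations_op {B : Type} [Ring B] [Algebra R B] [AddCommGroup G]
    {χ ψ : G → ι → R} {k j : G → B} {e : ι → B}
    (hk0 : k 0 = 1) (hk : ∀ a b, k (a + b) = k a * k b)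
    (hj0 : j 0 = 1) (hj : ∀ a b, j (a + b) = j a * j b)
    (hkj : ∀ a b, k a * j b = j b * k a)
    (hke : ∀ a i, e i * k a = χ a i • (k a * e i)) (hje : ∀ a i, e i * j a = ψ a i • (j a * e i)) :
    SmashRelations χ ψ (fun a => MulOpposite.op (k a)) (fun a => MulOpposite.op (j a))
      (fun i => MulOpposite.op (e i)) where
  K_zero := by rw [hk0, MulOpposite.op_one]
  K_add a b := by rw [add_comm, hk, MulOpposite.op_mul]
  J_zero := by rw [hj0, MulOpposite.op_one]
  J_add a b := by rw [add_comm, hj, MulOpposite.op_mul]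
  K_J_comm a b := by rw [← MulOpposite.op_mul, ← hkj, MulOpposite.op_mul]
  K_E a i := by rw [← MulOpposite.op_mul, hke, MulOpposite.op_smul, MulOpposite.op_mul]
  J_E a i := by rw [← MulOpposite.op_mul, hje, MulOpposite.op_smul, MulOpposite.op_mul]

namespace SmashRelations

variable {E : ι → A}

theorem of_δZ {I : Type} {χ ψ : (I →₀ ℤ) → ι → R} {K J : (I →₀ ℤ) → A}
    (hK0 : K 0 = 1) (hK : ∀ a b, K (a + b) = K a * K b)
    (hJ0 : J 0 = 1) (hJ : ∀ a b, J (a + b) = J a * J b)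
    (hKJ : ∀ a b, K a * J b = J b * K a)
    (hχ0 : ∀ i, χ 0 i = 1) (hχ : ∀ a b i, χ (a + b) i = χ a i * χ b i)
    (hψ0 : ∀ i, ψ 0 i = 1) (hψ : ∀ a b i, ψ (a + b) i = ψ a i * ψ b i)
    (hKE : ∀ l i, K (δZ l) * E i = χ (δZ l) i • (E i * K (δZ l)))
    (hJE : ∀ l i, J (δZ l) * E i = ψ (δZ l) i • (E i * J (δZ l))) :
    SmashRelations χ ψ K J E where
  K_zero := hK0
  K_add := hK
  J_zero := hJ0
  J_add := hJ
  K_J_comm := hKJ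
  K_E a i := mul_eq_smul_mul_of_δZ (c := fun a => χ a i) hK0 hK (hχ0 i) (fun a b => hχ a b i) (fun l => hKE l i) a
  J_E a i := mul_eq_smul_mul_of_δZ (c := fun a => ψ a i) hJ0 hJ (hψ0 i) (fun a b => hψ a b i) (fun l => hJE l i) a

theorem algHom_ext {I : Type} {B : Type} [Ring B] [Algebra R B] {χ ψ : (I →₀ ℤ) → ι → R}
    {K J : (I →₀ ℤ) → A} (h : SmashRelations χ ψ K J E)
    (b : Module.Basis ((I →₀ ℤ) × FreeMonoid ι × (I →₀ ℤ)) R A)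
    (hb : ∀ p, b p = K p.1 * wordProd E p.2.1 * J p.2.2) {φ φ' : A →ₐ[R] B}
    (hK : ∀ l, φ (K (δZ l)) = φ' (K (δZ l))) (hE : ∀ i, φ (E i) = φ' (E i))
    (hJ : ∀ l, φ (J (δZ l)) = φ' (J (δZ l))) : φ = φ' := by
  have exp_ext : ∀ {L : (I →₀ ℤ) → A}, L 0 = 1 → (∀ a b, L (a + b) = L a * L b) →
      (∀ l, φ (L (δZ l)) = φ' (L (δZ l))) → ∀ a, φ (L a) = φ' (L a) := fun h0 hadd hL =>
    congrFun (ext_δZ_of_map_add (by rw [h0, map_one]) (fun a b => by rw [hadd, map_mul])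
      (by rw [h0, map_one]) (fun a b => by rw [hadd, map_mul]) hL)
  refine AlgHom.toLinearMap_injective (b.ext fun p => ?_)
  simp only [AlgHom.toLinearMap_apply, hb, map_mul, map_wordProd, hE,
    exp_ext h.K_zero h.K_add hK, exp_ext h.J_zero h.J_add hJ]

variable [AddCommGroup G] {χ ψ : G → ι → R} {K J : G → A} (h : SmashRelations χ ψ K J E)
include h

theorem wordProd_mul_K (a : G) (w : FreeMonoid ι) :
    wordProd E w * K a = wordProd (χ (-a)) w • (K a * wordProd E w) := by
  calc wordProd E w * K a = K a * (K (-a) * wordProd E w) * K a := by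
        rw [← mul_assoc, ← h.K_add, add_neg_cancel, h.K_zero, one_mul]
    _ = wordProd (χ (-a)) w • (K a * wordProd E w) := by
        rw [mul_wordProd_eq_smul (h.K_E (-a)), mul_smul_comm, smul_mul_assoc, mul_assoc,
          mul_assoc, ← h.K_add, neg_add_cancel, h.K_zero, mul_one]

theorem basis_mul (a₁ c₁ a₂ c₂ : G) (w₁ w₂ : FreeMonoid ι) :
    K a₁ * wordProd E w₁ * J c₁ * (K a₂ * wordProd E w₂ * J c₂)
      = (wordProd (χ (-a₂)) w₁ * wordProd (ψ c₁) w₂) •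
          (K (a₁ + a₂) * wordProd E (w₁ * w₂) * J (c₁ + c₂)) := by
  calc K a₁ * wordProd E w₁ * J c₁ * (K a₂ * wordProd E w₂ * J c₂)
      = K a₁ * (wordProd E w₁ * K a₂) * (J c₁ * wordProd E w₂) * J c₂ := by
        simp only [mul_assoc]; rw [← mul_assoc (J c₁), ← h.K_J_comm, mul_assoc]
    _ = _ := by
        rw [h.wordProd_mul_K, mul_wordProd_eq_smul (h.J_E c₁), h.K_add, h.J_add, wordProd_mul]
        simp only [smul_mul_assoc, mul_smul_comm, smul_smul, mul_assoc]
        rw [mul_comm (wordProd (ψ c₁) w₂)]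

theorem exists_algHom {B : Type} [Ring B] [Algebra R B]
    (b : Module.Basis (G × FreeMonoid ι × G) R A) (hb : ∀ p, b p = K p.1 * wordProd E p.2.1 * J p.2.2)
    {k j : G → B} {e : ι → B} (hB : SmashRelations χ ψ k j e) :
    ∃ φ : A →ₐ[R] B, (∀ a, φ (K a) = k a) ∧ (∀ i, φ (E i) = e i) ∧ (∀ a, φ (J a) = j a) := by
  set f := b.constr R fun p => k p.1 * wordProd e p.2.1 * j p.2.2
  have hf : ∀ a w c, f (K a * wordProd E w * J c) = k a * wordProd e w * j c := fun a w c => by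
    rw [← hb (a, w, c), b.constr_basis]
  have f_one : f 1 = 1 := by
    simpa [h.K_zero, h.J_zero, hB.K_zero, hB.J_zero] using hf 0 1 0
  have f_mul : ∀ x y, f (x * y) = f x * f y := by
    rw [LinearMap.map_mul_iff]
    refine LinearMap.ext_basis b b fun p q => ?_
    simp only [LinearMap.compr₂_apply, LinearMap.compl₂_apply, LinearMap.comp_apply,
      LinearMap.mul_apply', hb]
    rw [h.basis_mul, map_smul, hf, hf, hf, hB.basis_mul]
  refine ⟨AlgHom.ofLinearMap f f_one f_mul, fun a => ?_, fun i => ?_, fun c => ?_⟩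
  · simpa [h.J_zero, hB.J_zero] using hf a 1 0
  · simpa [h.K_zero, h.J_zero, hB.K_zero, hB.J_zero] using hf 0 (FreeMonoid.of i) 0
  · simpa [h.K_zero, hB.K_zero] using hf 0 1 c

end SmashRelations

end Smash

section WeightDiagonal

variable {R A I : Type} [CommRing R] [Ring A] [Algebra R A] [DecidableEq I]
  {F : I → A} {K' J' : (I →₀ ℤ) → A}

/-- The shape of `𝒦_ν` (with `κ = ⟨ν, ·⟩`) and of `𝒥_ν` (with `κ = ξ(·, ν)`). -/
def IsWeightDiagonal (F : I → A) (K' J' : (I →₀ ℤ) → A) (T : Module.End R A)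
    (κ : (I →₀ ℤ) → R) : Prop :=
  ∀ (τ₁ τ₂ : I →₀ ℤ) (w : FreeMonoid I),
    T (K' τ₁ * wordProd F w * J' τ₂) = (κ τ₁ * κ (nz (wt w))) • (K' τ₁ * wordProd F w * J' τ₂)

theorem isWeightDiagonal_one : IsWeightDiagonal F K' J' (1 : Module.End R A) 1 := fun _ _ _ => by
  rw [Pi.one_apply, Pi.one_apply, mul_one, one_smul, Module.End.one_apply]

namespace IsWeightDiagonal

variable {T U : Module.End R A} {κ μ : (I →₀ ℤ) → R}

theorem mul (hT : IsWeightDiagonal F K' J' T κ) (hU : IsWeightDiagonal F K' J' U μ) :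
    IsWeightDiagonal F K' J' (T * U) (κ * μ) := fun τ₁ τ₂ w => by
  rw [Module.End.mul_apply, hU, map_smul, hT, smul_smul, Pi.mul_apply, Pi.mul_apply]
  ring_nf

theorem ext (b : Module.Basis ((I →₀ ℤ) × FreeMonoid I × (I →₀ ℤ)) R A)
    (hb : ∀ p, b p = K' p.1 * wordProd F p.2.1 * J' p.2.2)
    (hT : IsWeightDiagonal F K' J' T κ) (hU : IsWeightDiagonal F K' J' U μ) (h : κ = μ) :
    T = U :=
  b.ext fun p => by rw [hb, hT, hU, h]

theorem mul_eq_smul_mul (b : Module.Basis ((I →₀ ℤ) × FreeMonoid I × (I →₀ ℤ)) R A)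
    (hb : ∀ p, b p = K' p.1 * wordProd F p.2.1 * J' p.2.2)
    (hT : IsWeightDiagonal F K' J' T κ) (hκ : ∀ a c, κ (a + c) = κ a * κ c)
    {D : Module.End R A} {j : I}
    (hD : ∀ τ₁ τ₂ w, D (K' τ₁ * wordProd F w * J' τ₂) ∈
      Submodule.span R {x | ∃ u, wt u + δN j = wt w ∧ x = K' τ₁ * wordProd F u * J' τ₂}) :
    D * T = κ (δZ j) • (T * D) := by
  refine b.ext fun ⟨τ₁, w, τ₂⟩ => ?_
  have heig : D (b (τ₁, w, τ₂)) ∈ (κ (δZ j) • T).eigenspace (κ τ₁ * κ (nz (wt w))) := by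
    refine Submodule.span_le.2 ?_ (by rw [hb]; exact hD τ₁ τ₂ w)
    rintro _ ⟨u, hu, rfl⟩
    rw [SetLike.mem_coe, Module.End.mem_eigenspace_iff, LinearMap.smul_apply, hT, smul_smul, ← hu,
      nz_add, nz_δN, hκ]
    ring_nf
  rw [Module.End.mem_eigenspace_iff, LinearMap.smul_apply] at heig
  rw [Module.End.mul_apply, hb, hT, map_smul, ← hb, ← heig, LinearMap.smul_apply,
    Module.End.mul_apply]

end IsWeightDiagonal

theorem twistedDerivation_apply_mem_span {D P Q : Module.End R A} {κP κQ : (I →₀ ℤ) → R}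
    (hP : IsWeightDiagonal F K' J' P κP) (hQ : IsWeightDiagonal F K' J' Q κQ)
    (hK'0 : K' 0 = 1) (hJ'0 : J' 0 = 1) (hmul : ∀ x y, D (x * y) = D x * P y + Q x * D y)
    (h0 : ∀ τ₁ τ₂, D (K' τ₁ * J' τ₂) = 0) {j : I} (hF : ∀ i, i ≠ j → D (F i) = 0)
    (hFj : D (F j) ∈ R ∙ (1 : A)) (τ₁ τ₂ : I →₀ ℤ) (w : FreeMonoid I) :
    D (K' τ₁ * wordProd F w * J' τ₂) ∈
      Submodule.span R {x | ∃ u, wt u + δN j = wt w ∧ x = K' τ₁ * wordProd F u * J' τ₂} := by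
  have hQK : ∀ τ, Q (K' τ) = (κQ τ * κQ 0) • K' τ := fun τ => by
    simpa [hJ'0, wt_one, nz] using hQ τ 0 1
  have hQF : ∀ i, Q (F i) = (κQ 0 * κQ (δZ i)) • F i := fun i => by
    simpa [hK'0, hJ'0, wt_of, nz_δN] using hQ 0 0 (FreeMonoid.of i)
  have hword : ∀ w : FreeMonoid I, D (wordProd F w * J' τ₂) ∈
      Submodule.span R {x | ∃ u, wt u + δN j = wt w ∧ x = wordProd F u * J' τ₂} := by
    intro w
    induction w using FreeMonoid.inductionOn' with
    | one =>
      have hDJ : D (J' τ₂) = 0 := by simpa [hK'0] using h0 0 τ₂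
      simp [hDJ]
    | of_mul i w ih =>
      have hPw := hP 0 τ₂ w
      rw [hK'0, one_mul] at hPw
      rw [wordProd_mul, wordProd_of, mul_assoc, hmul, hPw, hQF, mul_smul_comm, smul_mul_assoc]
      refine Submodule.add_mem _ (Submodule.smul_mem _ _ ?_) (Submodule.smul_mem _ _ ?_)
      · by_cases hij : i = j
        · subst hij
          obtain ⟨r, hr⟩ := Submodule.mem_span_singleton.1 hFj
          rw [← hr, smul_mul_assoc, one_mul]
          exact Submodule.smul_mem _ _ (Submodule.subset_span
            ⟨w, by rw [wt_mul, wt_of, add_comm], rfl⟩)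
        · rw [hF i hij, zero_mul]
          exact Submodule.zero_mem _
      · refine Submodule.span_le.2 ?_
          (Submodule.apply_mem_span_image_of_mem_span (LinearMap.mulLeft R (F i)) ih)
        rintro _ ⟨_, ⟨u, hu, rfl⟩, rfl⟩
        exact Submodule.subset_span ⟨FreeMonoid.of i * u, by rw [wt_mul, wt_mul, add_assoc, hu],
          by rw [LinearMap.mulLeft_apply, wordProd_mul, wordProd_of, mul_assoc]⟩
  have hDK : D (K' τ₁) = 0 := by simpa [hJ'0] using h0 τ₁ 0
  rw [mul_assoc, hmul, hDK, zero_mul, zero_add, hQK, smul_mul_assoc]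
  refine Submodule.smul_mem _ _ (Submodule.span_le.2 ?_
    (Submodule.apply_mem_span_image_of_mem_span (LinearMap.mulLeft R (K' τ₁)) (hword w)))
  rintro _ ⟨_, ⟨u, hu, rfl⟩, rfl⟩
  exact Submodule.subset_span ⟨u, hu, by rw [LinearMap.mulLeft_apply, mul_assoc]⟩

end WeightDiagonal

theorem smashRelations_op_of_isWeightDiagonal {𝔽 A I : Type} [Field 𝔽] [Ring A] [Algebra 𝔽 A]
    [DecidableEq I] {F : I → A} {K' J' : (I →₀ ℤ) → A}
    (b : Module.Basis ((I →₀ ℤ) × FreeMonoid I × (I →₀ ℤ)) 𝔽 A)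
    (hb : ∀ p, b p = K' p.1 * wordProd F p.2.1 * J' p.2.2)
    {g h : I → I → 𝔽} (hg : ∀ i j, g i j ≠ 0) (hh : ∀ i j, h i j ≠ 0)
    {k j : (I →₀ ℤ) → Module.End 𝔽 A} {e : I → Module.End 𝔽 A}
    (hk : ∀ ν, IsWeightDiagonal F K' J' (k ν) (extZ g ν))
    (hj : ∀ ν, IsWeightDiagonal F K' J' (j ν) (fun μ => extZ h μ ν))
    (he : ∀ i τ₁ τ₂ w, e i (K' τ₁ * wordProd F w * J' τ₂) ∈ Submodule.span 𝔽
      {x | ∃ u, wt u + δN i = wt w ∧ x = K' τ₁ * wordProd F u * J' τ₂}) :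
    SmashRelations (fun a i => extZ g a (δZ i)) (fun a i => extZ h (δZ i) a)
      (fun a => MulOpposite.op (k a)) (fun a => MulOpposite.op (j a))
      (fun i => MulOpposite.op (e i)) :=
  smashRelations_op
    ((hk 0).ext b hb isWeightDiagonal_one (funext (extZ_zero_left g)))
    (fun a c => (hk (a + c)).ext b hb ((hk a).mul (hk c)) (funext (extZ_add_left hg a c)))
    ((hj 0).ext b hb isWeightDiagonal_one (funext fun μ => extZ_zero_right h μ))
    (fun a c => (hj (a + c)).ext b hb ((hj a).mul (hj c))
      (funext fun μ => extZ_add_right hh μ a c))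
    (fun a c => ((hk a).mul (hj c)).ext b hb ((hj c).mul (hk a)) (mul_comm _ _))
    (fun a i => (hk a).mul_eq_smul_mul b hb (extZ_add_right hg a) (he i))
    (fun a i => (hj a).mul_eq_smul_mul b hb (fun c d => extZ_add_left hh c d a) (he i))

def LinearMap.toOpAlgHom {R A B : Type} [CommRing R] [Ring A] [Algebra R A] [Ring B] [Algebra R B]
    (ρ : A →ₗ[R] B) (h1 : ρ 1 = 1) (hmul : ∀ x y, ρ (x * y) = ρ y * ρ x) : A →ₐ[R] Bᵐᵒᵖ :=
  AlgHom.ofLinearMap ((MulOpposite.opLinearEquiv R).toLinearMap ∘ₗ ρ) (by simp [h1])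
    (by simp [hmul])

@[simp]
theorem LinearMap.toOpAlgHom_apply {R A B : Type} [CommRing R] [Ring A] [Algebra R A] [Ring B]
    [Algebra R B] (ρ : A →ₗ[R] B) (h1 : ρ 1 = 1) (hmul : ∀ x y, ρ (x * y) = ρ y * ρ x) (x : A) :
    ρ.toOpAlgHom h1 hmul x = MulOpposite.op (ρ x) :=
  rfl

theorem exists_unique_rho_plus_general
    {I : Type} [DecidableEq I] (cd : CartanDatum I)
    {𝔽 : Type} [Field 𝔽] [CharZero 𝔽] (v : 𝔽) (hv : Transcendental ℚ v)
    (βg ξg : I → I → 𝔽)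
    (hββ : ∀ i j, βg i j * βg j i = 1)
    (hξne : ∀ i j, ξg i j ≠ 0)
    {Ap : Type} [Ring Ap] [Algebra 𝔽 Ap]
    (E : I → Ap) (K Jp : (I →₀ ℤ) → Ap)
    (hK0 : K 0 = 1) (hKadd : ∀ a b, K (a + b) = K a * K b)
    (hJ0 : Jp 0 = 1) (hJadd : ∀ a b, Jp (a + b) = Jp a * Jp b)
    (hKJ : ∀ a b, K a * Jp b = Jp b * K a)
    (hKE : ∀ i j : I, K (δZ i) * E j = ang cd v βg ξg (δZ i) (δZ j) • (E j * K (δZ i)))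
    (hJE : ∀ i j : I, Jp (δZ i) * E j = ξg j i • (E j * Jp (δZ i)))
    (bp : Module.Basis ((I →₀ ℤ) × FreeMonoid I × (I →₀ ℤ)) 𝔽 Ap)
    (hbp : ∀ p, bp p = K p.1 * wordProd E p.2.1 * Jp p.2.2)
    {Am : Type} [Ring Am] [Algebra 𝔽 Am]
    (F : I → Am) (K' J' : (I →₀ ℤ) → Am)
    (hK'0 : K' 0 = 1)
    (hJ'0 : J' 0 = 1)
    (bm : Module.Basis ((I →₀ ℤ) × FreeMonoid I × (I →₀ ℤ)) 𝔽 Am)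
    (hbm : ∀ p, bm p = K' p.1 * wordProd F p.2.1 * J' p.2.2)
    (cK cJ : (I →₀ ℤ) → (Am →ₗ[𝔽] Am))
    (hcK : ∀ (ν τ₁ τ₂ : I →₀ ℤ) (w : FreeMonoid I),
      cK ν (K' τ₁ * wordProd F w * J' τ₂)
        = (ang cd v βg ξg ν τ₁ * ang cd v βg ξg ν (nz (wt w))) • (K' τ₁ * wordProd F w * J' τ₂))
    (hcJ : ∀ (ν τ₁ τ₂ : I →₀ ℤ) (w : FreeMonoid I),
      cJ ν (K' τ₁ * wordProd F w * J' τ₂)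
        = (extZ ξg τ₁ ν * extZ ξg (nz (wt w)) ν) • (K' τ₁ * wordProd F w * J' τ₂))
    (iS : I → (Am →ₗ[𝔽] Am))
    (hiS0 : ∀ (j : I) (τ₁ τ₂ : I →₀ ℤ), iS j (K' τ₁ * J' τ₂) = 0)
    (hiSF : ∀ j i : I, iS j (F i) = if i = j then ξg i j • (1 : Am) else 0)
    (hiSmul : ∀ (j : I) (x y : Am), iS j (x * y) = iS j x * cJ (δZ j) y + cK (δZ j) x * iS j y)
    :
    ∃! ρ : Ap →ₗ[𝔽] Module.End 𝔽 Am,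
      (∀ x y : Ap, ρ (x * y) = ρ y * ρ x) ∧ ρ 1 = 1 ∧
      (∀ j : I, ρ (E j) = (v ^ (-(cd.d j)) - v ^ (cd.d j))⁻¹ • iS j) ∧
      (∀ i : I, ρ (K (δZ i)) = cK (δZ i)) ∧ (∀ i : I, ρ (K (-(δZ i))) = cK (-(δZ i))) ∧
      (∀ i : I, ρ (Jp (δZ i)) = cJ (δZ i)) ∧ (∀ i : I, ρ (Jp (-(δZ i))) = cJ (-(δZ i))) := by
  have hang : ∀ i j, v ^ (-(cd.c i j)) * βg i j * ξg j i ≠ 0 := fun i j =>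
    mul_ne_zero (mul_ne_zero (zpow_ne_zero _ fun h => hv (h ▸ isAlgebraic_zero))
      (left_ne_zero_of_mul_eq_one (hββ i j))) (hξne j i)
  set e : I → Module.End 𝔽 Am := fun j => (v ^ (-(cd.d j)) - v ^ (cd.d j))⁻¹ • iS j
  have hlower : ∀ j τ₁ τ₂ w, e j (K' τ₁ * wordProd F w * J' τ₂) ∈ Submodule.span 𝔽
      {x | ∃ u, wt u + δN j = wt w ∧ x = K' τ₁ * wordProd F u * J' τ₂} := fun j τ₁ τ₂ w =>
    Submodule.smul_mem _ _ (twistedDerivation_apply_mem_span (hcJ (δZ j)) (hcK (δZ j)) hK'0 hJ'0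
      (hiSmul j) (hiS0 j) (fun i hij => by rw [hiSF, if_neg hij])
      (by rw [hiSF, if_pos rfl]; exact Submodule.smul_mem _ _ (Submodule.mem_span_singleton_self 1))
      τ₁ τ₂ w)
  have hAp : SmashRelations (fun a i => ang cd v βg ξg a (δZ i)) (fun a i => extZ ξg (δZ i) a)
      K Jp E :=
    .of_δZ hK0 hKadd hJ0 hJadd hKJ (fun _ => extZ_zero_left _ _)
      (fun a b _ => extZ_add_left hang a b _) (fun _ => extZ_zero_right _ _)
      (fun a b _ => extZ_add_right hξne _ a b) hKE (fun l i => by rw [extZ_δZ_δZ]; exact hJE l i)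
  have hB : SmashRelations (fun a i => ang cd v βg ξg a (δZ i)) (fun a i => extZ ξg (δZ i) a)
      (fun a => MulOpposite.op (cK a)) (fun a => MulOpposite.op (cJ a))
      (fun i => MulOpposite.op (e i)) :=
    smashRelations_op_of_isWeightDiagonal bm hbm hang hξne hcK hcJ hlower
  obtain ⟨φ, hφK, hφE, hφJ⟩ := hAp.exists_algHom bp hbp hB
  refine ⟨(MulOpposite.opLinearEquiv 𝔽).symm.toLinearMap ∘ₗ φ.toLinearMap,
    ⟨fun x y => by simp, by simp, fun j => by simp [hφE, e], fun i => by simp [hφK],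
      fun i => by simp [hφK], fun i => by simp [hφJ], fun i => by simp [hφJ]⟩, ?_⟩
  rintro ρ ⟨hmul, h1, hρE, hρK, -, hρJ, -⟩
  have hρφ := hAp.algHom_ext bp hbp (φ := ρ.toOpAlgHom h1 hmul) (φ' := φ)
    (fun l => by simp [hρK, hφK]) (fun i => by simp [hρE, hφE, e]) (fun l => by simp [hρJ, hφJ])
  exact LinearMap.ext fun x => by simpa using congrArg MulOpposite.unop (DFunLike.congr_fun hρφ x)

theorem exists_unique_rho_plus
    {I : Type} [Fintype I] [DecidableEq I] (cd : CartanDatum I)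
    {𝔽 : Type} [Field 𝔽] [CharZero 𝔽] (v : 𝔽) (hv : Transcendental ℚ v)
    (βg ξg : I → I → 𝔽)
    (hββ : ∀ i j, βg i j * βg j i = 1) (hβii : ∀ i, βg i i = 1)
    (hξsymm : ∀ i j, ξg i j = ξg j i) (hξne : ∀ i j, ξg i j ≠ 0)
    {Ap : Type} [Ring Ap] [Algebra 𝔽 Ap]
    (E : I → Ap) (K Jp : (I →₀ ℤ) → Ap)
    (hK0 : K 0 = 1) (hKadd : ∀ a b, K (a + b) = K a * K b)
    (hJ0 : Jp 0 = 1) (hJadd : ∀ a b, Jp (a + b) = Jp a * Jp b)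
    (hKJ : ∀ a b, K a * Jp b = Jp b * K a)
    (hKE : ∀ i j : I, K (δZ i) * E j = ang cd v βg ξg (δZ i) (δZ j) • (E j * K (δZ i)))
    (hJE : ∀ i j : I, Jp (δZ i) * E j = ξg j i • (E j * Jp (δZ i)))
    (bp : Module.Basis ((I →₀ ℤ) × FreeMonoid I × (I →₀ ℤ)) 𝔽 Ap)
    (hbp : ∀ p, bp p = K p.1 * wordProd E p.2.1 * Jp p.2.2)
    {Am : Type} [Ring Am] [Algebra 𝔽 Am]
    (F : I → Am) (K' J' : (I →₀ ℤ) → Am)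
    (hK'0 : K' 0 = 1) (hK'add : ∀ a b, K' (a + b) = K' a * K' b)
    (hJ'0 : J' 0 = 1) (hJ'add : ∀ a b, J' (a + b) = J' a * J' b)
    (hK'J' : ∀ a b, K' a * J' b = J' b * K' a)
    (hK'F : ∀ i j : I, K' (δZ i) * F j
      = (ang cd v βg ξg (δZ j) (δZ i) * (ξg i j)⁻¹) • (F j * K' (δZ i)))
    (hJ'F : ∀ i j : I, J' (δZ i) * F j = F j * J' (δZ i))
    (bm : Module.Basis ((I →₀ ℤ) × FreeMonoid I × (I →₀ ℤ)) 𝔽 Am)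
    (hbm : ∀ p, bm p = K' p.1 * wordProd F p.2.1 * J' p.2.2)
    (cK cJ : (I →₀ ℤ) → (Am →ₗ[𝔽] Am))
    (hcK : ∀ (ν τ₁ τ₂ : I →₀ ℤ) (w : FreeMonoid I),
      cK ν (K' τ₁ * wordProd F w * J' τ₂)
        = (ang cd v βg ξg ν τ₁ * ang cd v βg ξg ν (nz (wt w))) • (K' τ₁ * wordProd F w * J' τ₂))
    (hcJ : ∀ (ν τ₁ τ₂ : I →₀ ℤ) (w : FreeMonoid I),
      cJ ν (K' τ₁ * wordProd F w * J' τ₂)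
        = (extZ ξg τ₁ ν * extZ ξg (nz (wt w)) ν) • (K' τ₁ * wordProd F w * J' τ₂))
    (iS : I → (Am →ₗ[𝔽] Am))
    (hiS0 : ∀ (j : I) (τ₁ τ₂ : I →₀ ℤ), iS j (K' τ₁ * J' τ₂) = 0)
    (hiSF : ∀ j i : I, iS j (F i) = if i = j then ξg i j • (1 : Am) else 0)
    (hiSmul : ∀ (j : I) (x y : Am), iS j (x * y) = iS j x * cJ (δZ j) y + cK (δZ j) x * iS j y)
    :
    ∃! ρ : Ap →ₗ[𝔽] Module.End 𝔽 Am,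
      (∀ x y : Ap, ρ (x * y) = ρ y * ρ x) ∧ ρ 1 = 1 ∧
      (∀ j : I, ρ (E j) = (v ^ (-(cd.d j)) - v ^ (cd.d j))⁻¹ • iS j) ∧
      (∀ i : I, ρ (K (δZ i)) = cK (δZ i)) ∧ (∀ i : I, ρ (K (-(δZ i))) = cK (-(δZ i))) ∧
      (∀ i : I, ρ (Jp (δZ i)) = cJ (δZ i)) ∧ (∀ i : I, ρ (Jp (-(δZ i))) = cJ (-(δZ i))) :=
  exists_unique_rho_plus_general cd v hv βg ξg hββ hξne E K Jp hK0 hKadd hJ0 hJadd hKJ hKE hJE bp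
    hbp F K' J' hK'0 hJ'0 bm hbm cK cJ hcK hcJ iS hiS0 hiSF hiSmul
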